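/- arXiv:2505.07029 — 4 statements merged into one kernel-verified Lean document; each statement's English description precedes it below -/
import Mathlib

section
/- Let Σ_YY be an m×m positive definite real matrix, σ² > 0 with Σ_YY − σ²·I positive semidefinite, and λ ≥ 1. Then the function φ : [0,∞)ᵐ → ℝ given by φ(v) = (1/2)(1−λ)·log det(Σ_YY + D(v)) − (1/2)·log det(σ²·I + D(v)) + (λ/2)·(log det Σ_YY + tr(Σ_YY⁻¹ D(v))), where D(v) = diag(v₁,…,v_m), is convex in each coordinate v_i (the other coordinates held fixed). -/
/-!
Along the `i`-th coordinate, `det (M + t • Eᵢᵢ) = det M + t * adj(M)ᵢᵢ` is affine in `t`, with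
positive constant and slope when `M` is positive definite, so both `log det` terms are concave
in `t`. Since `λ ≥ 1` both enter `φ` with nonpositive coefficients, and the trace term is affine.
-/

open Matrix Real Set

theorem concaveOn_log_affine {a b : ℝ} (ha : 0 < a) (hb : 0 ≤ b) :
    ConcaveOn ℝ (Ici 0) fun t => log (a + b * t) := by
  let g : ℝ →ᵃ[ℝ] ℝ := AffineMap.const ℝ ℝ a + (b • LinearMap.id).toAffineMap
  refine (strictConcaveOn_log_Ioi.concaveOn.comp_affineMap g).subset (fun t ht => ?_)
    (convex_Ici 0)
  show 0 < a + b * t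
  have : 0 ≤ b * t := mul_nonneg hb ht
  linarith

namespace Matrix

variable {n R : Type*} [DecidableEq n]

theorem diagonal_update_eq_add_smul [Semiring R] (v : n → R) (i : n) (t : R) :
    diagonal (Function.update v i t) =
      diagonal (Function.update v i 0) + t • diagonal (Pi.single i 1) := by
  rw [← diagonal_smul, diagonal_add]
  congr 1
  ext j
  by_cases hj : j = i
  · subst hj; simp
  · simp [hj]

variable [Fintype n]

theorem det_add_smul_diagonal_single [CommRing R] (M : Matrix n n R) (i : n) (t : R) :
    (M + t • diagonal (Pi.single i 1)).det = M.det + t * M.adjugate i i := by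
  have hrow : M + t • diagonal (Pi.single i 1) = M.updateRow i (M i + t • Pi.single i 1) := by
    ext j k
    by_cases hj : j = i
    · subst hj
      simp [diagonal, Pi.single_apply, eq_comm]
    · simp [diagonal, Pi.single_apply, hj]
  rw [hrow, det_updateRow_add, det_updateRow_smul, updateRow_eq_self, adjugate_apply]

theorem trace_mul_diagonal_update [CommSemiring R] (A : Matrix n n R) (v : n → R) (i : n) (t : R) :
    (A * diagonal (Function.update v i t)).trace =
      (A * diagonal (Function.update v i 0)).trace + t * A i i := by
  rw [diagonal_update_eq_add_smul, Matrix.mul_add, trace_add, Matrix.mul_smul, trace_smul,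
    smul_eq_mul]
  simp [trace, mul_diagonal, Pi.single_apply]

theorem PosDef.adjugate_diag_pos {M : Matrix n n ℝ} (hM : M.PosDef) (i : n) :
    0 < M.adjugate i i := by
  have hinv : M⁻¹ i i = M.det⁻¹ * M.adjugate i i := by simp [inv_def]
  have hpos := hM.inv.diag_pos (i := i)
  rw [hinv] at hpos
  exact pos_of_mul_pos_right hpos (inv_pos.mpr hM.det_pos).le

theorem PosDef.concaveOn_log_det_add_diagonal_update {M : Matrix n n ℝ} (hM : M.PosDef)
    {v : n → ℝ} (hv : ∀ j, 0 ≤ v j) (i : n) :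
    ConcaveOn ℝ (Ici 0) fun t => log (M + diagonal (Function.update v i t)).det := by
  have hM₀ : (M + diagonal (Function.update v i 0)).PosDef :=
    hM.add_posSemidef <| posSemidef_diagonal_iff.mpr fun j => by
      rcases eq_or_ne j i with rfl | hj
      · simp
      · simpa [hj] using hv j
  convert concaveOn_log_affine hM₀.det_pos (hM₀.adjugate_diag_pos i).le using 2 with t
  rw [diagonal_update_eq_add_smul, ← add_assoc, det_add_smul_diagonal_single, mul_comm t]

end Matrix

theorem stmt_7_general (m : ℕ) (Syy : Matrix (Fin m) (Fin m) ℝ) (hS : Syy.PosDef)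
    (σ2 : ℝ) (hσ : 0 < σ2)
    (lam : ℝ) (hlam : 1 ≤ lam) :
    ∀ (i : Fin m) (v : Fin m → ℝ), (∀ j, 0 ≤ v j) →
      ConvexOn ℝ (Set.Ici (0 : ℝ)) (fun t : ℝ =>
        (1 / 2) * (1 - lam) *
            Real.log ((Syy + Matrix.diagonal (Function.update v i t)).det)
          - (1 / 2) *
            Real.log ((σ2 • (1 : Matrix (Fin m) (Fin m) ℝ)
              + Matrix.diagonal (Function.update v i t)).det)
          + (lam / 2) * (Real.log Syy.det
              + (Syy⁻¹ * Matrix.diagonal (Function.update v i t)).trace)) := by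
  intro i v hv
  have hlogS := (hS.concaveOn_log_det_add_diagonal_update hv i).neg.smul
    (c := (lam - 1) / 2) (by linarith)
  have hlogσ := ((PosDef.one.smul hσ).concaveOn_log_det_add_diagonal_update hv i).neg.smul
    (c := (1 / 2 : ℝ)) (by norm_num)
  have htrace : ConvexOn ℝ (Ici 0) fun t : ℝ =>
      (lam / 2) * (log Syy.det + (Syy⁻¹ * diagonal (Function.update v i 0)).trace)
        + t * ((lam / 2) * Syy⁻¹ i i) :=
    (convexOn_const _ (convex_Ici 0)).add ((LinearMap.id.smulRight _).convexOn (convex_Ici 0))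
  refine ((hlogS.add hlogσ).add htrace).congr fun t _ => ?_
  simp only [Pi.add_apply, Pi.neg_apply, smul_eq_mul]
  rw [trace_mul_diagonal_update _ _ _ t]
  ring

/-- Convexity in each coordinate of the game-`G₁` cost function
`φ(v) = (1/2)(1−λ)·log det(Σ_YY + diag v) − (1/2)·log det(σ²I + diag v)
      + (λ/2)(log det Σ_YY + tr(Σ_YY⁻¹ diag v))`, for `λ ≥ 1`,
`Σ_YY` positive definite with `Σ_YY − σ²I` positive semidefinite. -/
theorem stmt_7 (m : ℕ) (Syy : Matrix (Fin m) (Fin m) ℝ) (hS : Syy.PosDef)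
    (σ2 : ℝ) (hσ : 0 < σ2) (hdom : (Syy - σ2 • (1 : Matrix (Fin m) (Fin m) ℝ)).PosSemidef)
    (lam : ℝ) (hlam : 1 ≤ lam) :
    ∀ (i : Fin m) (v : Fin m → ℝ), (∀ j, 0 ≤ v j) →
      ConvexOn ℝ (Set.Ici (0 : ℝ)) (fun t : ℝ =>
        (1 / 2) * (1 - lam) *
            Real.log ((Syy + Matrix.diagonal (Function.update v i t)).det)
          - (1 / 2) *
            Real.log ((σ2 • (1 : Matrix (Fin m) (Fin m) ℝ)
              + Matrix.diagonal (Function.update v i t)).det)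
          + (lam / 2) * (Real.log Syy.det
              + (Syy⁻¹ * Matrix.diagonal (Function.update v i t)).trace)) :=
  stmt_7_general m Syy hS σ2 hσ lam hlam
end

section
/- Let Σ_YY be an m×m positive definite matrix with Σ_YY − σ²I positive semidefinite and σ² > 0. For v ∈ [0,∞)ᵐ, the function v ↦ log det(Σ_YY + diag(v)) − log det(σ²I + diag(v)) is nonnegative and tends to 0 as min_i v_i → ∞. -/
/-!
Write `D = diag v`. In the Loewner order `σ²I + D ≤ Σ_YY + D ≤ (σ² + c)I + D` with
`c = tr(Σ_YY − σ²I)`, and `det` is monotone on positive definite matrices (conjugate by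
`A^{-1/2}` to reduce to `1 ≤ C ⟹ 1 ≤ det C`). The left inequality gives nonnegativity; the right
one bounds the difference of log-determinants by `∑ᵢ log(1 + c/(σ² + vᵢ)) ≤ ∑ᵢ c/(σ² + vᵢ)`,
which is small once every `vᵢ` is large.
-/

open Matrix Real
open scoped MatrixOrder

namespace Matrix

variable {n : Type*} [DecidableEq n]

theorem smul_one_add_diagonal (s : ℝ) (v : n → ℝ) :
    s • (1 : Matrix n n ℝ) + diagonal v = diagonal fun i => s + v i := by
  rw [smul_one_eq_diagonal, diagonal_add]

theorem posDef_smul_one_add_diagonal {s : ℝ} {v : n → ℝ} (h : ∀ i, 0 < s + v i) :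
    (s • (1 : Matrix n n ℝ) + diagonal v).PosDef := by
  rw [smul_one_add_diagonal]
  exact posDef_diagonal_iff.mpr h

variable [Fintype n]

theorem PosSemidef.le_trace_smul_one {P : Matrix n n ℝ} (hP : P.PosSemidef) :
    P ≤ P.trace • (1 : Matrix n n ℝ) := by
  rw [← Algebra.algebraMap_eq_smul_one]
  refine le_algebraMap_of_spectrum_le (fun x hx => ?_) hP.isHermitian
  obtain ⟨i, rfl⟩ := hP.isHermitian.spectrum_real_eq_range_eigenvalues ▸ hx
  rw [hP.isHermitian.trace_eq_sum_eigenvalues]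
  exact Finset.single_le_sum (fun j _ => hP.eigenvalues_nonneg j) (Finset.mem_univ i)

theorem one_le_det_of_one_le {C : Matrix n n ℝ} (h : 1 ≤ C) : 1 ≤ C.det := by
  have hC : C.IsHermitian := (zero_le_one.trans h).posSemidef.isHermitian
  have hspec : ∀ x ∈ spectrum ℝ C, 1 ≤ x :=
    (algebraMap_le_iff_le_spectrum hC).mp (by rwa [map_one])
  rw [hC.det_eq_prod_eigenvalues]
  exact Finset.one_le_prod fun i _ => hspec _ (hC.eigenvalues_mem_spectrum_real i)

theorem PosDef.det_le_det_of_le {A B : Matrix n n ℝ} (hA : A.PosDef) (hAB : A ≤ B) :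
    A.det ≤ B.det := by
  set Q := CFC.sqrt A
  have hQ : Q.PosDef :=
    isStrictlyPositive_iff_posDef.mp (isStrictlyPositive_iff_posDef.mpr hA).sqrt
  have hQQ : Q * Q = A := CFC.sqrt_mul_sqrt_self A hA.posSemidef.nonneg
  have hQu : IsUnit Q.det := isUnit_iff_ne_zero.mpr hQ.det_pos.ne'
  have hone : 1 ≤ Q⁻¹ * B * Q⁻¹ := by
    have hQAQ : Q⁻¹ * A * Q⁻¹ = 1 := by
      simp [← hQQ, mul_nonsing_inv _ hQu, nonsing_inv_mul_cancel_left _ _ hQu]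
    have h := star_left_conjugate_le_conjugate hAB Q⁻¹
    rwa [star_eq_conjTranspose, hQ.isHermitian.inv.eq, hQAQ] at h
  have hB : B = Q * (Q⁻¹ * B * Q⁻¹) * Q := by
    simp [Matrix.mul_assoc, nonsing_inv_mul _ hQu, mul_nonsing_inv_cancel_left _ _ hQu]
  have hdetB : B.det = A.det * (Q⁻¹ * B * Q⁻¹).det := by
    calc B.det = (Q * (Q⁻¹ * B * Q⁻¹) * Q).det := congrArg det hB
      _ = (Q * Q).det * (Q⁻¹ * B * Q⁻¹).det := by simp only [det_mul]; ring
      _ = A.det * (Q⁻¹ * B * Q⁻¹).det := by rw [hQQ]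
  rw [hdetB]
  exact le_mul_of_one_le_right hA.det_pos.le (one_le_det_of_one_le hone)

theorem log_det_smul_one_add_diagonal {s : ℝ} {v : n → ℝ} (h : ∀ i, s + v i ≠ 0) :
    log (s • (1 : Matrix n n ℝ) + diagonal v).det = ∑ i, log (s + v i) := by
  rw [smul_one_add_diagonal, det_diagonal, log_prod fun i _ => h i]

end Matrix

theorem Real.log_add_sub_log_le {a c : ℝ} (ha : 0 < a) (hac : 0 < a + c) :
    log (a + c) - log a ≤ c / a := by
  rw [← log_div hac.ne' ha.ne']
  calc log ((a + c) / a) ≤ (a + c) / a - 1 := log_le_sub_one_of_pos (div_pos hac ha)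
    _ = c / a := by field_simp; ring

theorem sum_log_add_sub_log_lt_of_le {ι : Type*} [Fintype ι] {s c ε : ℝ} (hs : 0 < s) (hc : 0 ≤ c)
    (hε : 0 < ε) {v : ι → ℝ} (hv : ∀ i, Fintype.card ι * c / ε ≤ v i) :
    ∑ i, (log (s + c + v i) - log (s + v i)) < ε := by
  set M := Fintype.card ι * c / ε
  have hM : 0 ≤ M := by positivity
  have hterm : ∀ i, log (s + c + v i) - log (s + v i) ≤ c / (s + M) := fun i => by
    have hsv : 0 < s + v i := by linarith [hv i]
    calc log (s + c + v i) - log (s + v i) ≤ c / (s + v i) := by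
          rw [add_right_comm]; exact log_add_sub_log_le hsv (by linarith)
      _ ≤ c / (s + M) := div_le_div_of_nonneg_left hc (by linarith) (by linarith [hv i])
  calc ∑ i, (log (s + c + v i) - log (s + v i)) ≤ Fintype.card ι * (c / (s + M)) := by
        simpa using Finset.sum_le_sum fun i (_ : i ∈ Finset.univ) => hterm i
    _ < ε := by
        have hεM : ε * M = Fintype.card ι * c := by simp only [M]; field_simp
        rw [← mul_div_assoc, div_lt_iff₀ (by linarith), mul_add, hεM]
        linarith [mul_pos hε hs]

/-- For `Σ_YY` positive definite with `Σ_YY − σ²I` positive semidefinite, the function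
`v ↦ log det(Σ_YY + diag v) − log det(σ²I + diag v)` is nonnegative on `[0,∞)ᵐ`
and tends to `0` as `min_i v_i → ∞`. -/
theorem stmt_11 (m : ℕ) (Syy : Matrix (Fin m) (Fin m) ℝ) (hS : Syy.PosDef)
    (σ2 : ℝ) (hσ : 0 < σ2) (hdom : (Syy - σ2 • (1 : Matrix (Fin m) (Fin m) ℝ)).PosSemidef) :
    (∀ v : Fin m → ℝ, (∀ i, 0 ≤ v i) →
      0 ≤ Real.log ((Syy + Matrix.diagonal v).det)
          - Real.log ((σ2 • (1 : Matrix (Fin m) (Fin m) ℝ) + Matrix.diagonal v).det)) ∧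
    (∀ ε : ℝ, 0 < ε → ∃ M : ℝ, ∀ v : Fin m → ℝ, (∀ i, 0 ≤ v i) → (∀ i, M ≤ v i) →
      Real.log ((Syy + Matrix.diagonal v).det)
        - Real.log ((σ2 • (1 : Matrix (Fin m) (Fin m) ℝ) + Matrix.diagonal v).det) < ε) := by
  set c := (Syy - σ2 • (1 : Matrix (Fin m) (Fin m) ℝ)).trace
  have hlower : σ2 • 1 ≤ Syy := le_iff.mpr hdom
  have hupper : Syy ≤ (σ2 + c) • 1 := by
    rw [add_smul, ← sub_le_iff_le_add']
    exact hdom.le_trace_smul_one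
  have hpd {v : Fin m → ℝ} (hv : ∀ i, 0 ≤ v i) : (σ2 • 1 + diagonal v).PosDef :=
    posDef_smul_one_add_diagonal fun i => by linarith [hv i]
  have hdet_le {v : Fin m → ℝ} (hv : ∀ i, 0 ≤ v i) :
      (σ2 • 1 + diagonal v).det ≤ (Syy + diagonal v).det :=
    (hpd hv).det_le_det_of_le (add_le_add_left hlower _)
  refine ⟨fun v hv => sub_nonneg.mpr (log_le_log (hpd hv).det_pos (hdet_le hv)), fun ε hε => ?_⟩
  refine ⟨Fintype.card (Fin m) * c / ε, fun v hv hvM => ?_⟩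
  have hc : 0 ≤ c := hdom.trace_nonneg
  have hlog_upper : log (Syy + diagonal v).det ≤ ∑ i, log (σ2 + c + v i) := by
    rw [← log_det_smul_one_add_diagonal fun i => by linarith [hv i]]
    exact log_le_log ((hpd hv).det_pos.trans_le (hdet_le hv))
      ((hS.add_posSemidef (posSemidef_diagonal_iff.mpr hv)).det_le_det_of_le
        (add_le_add_left hupper _))
  rw [log_det_smul_one_add_diagonal fun i => by linarith [hv i]]
  calc log (Syy + diagonal v).det - ∑ i, log (σ2 + v i)
      ≤ ∑ i, (log (σ2 + c + v i) - log (σ2 + v i)) := by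
        rw [Finset.sum_sub_distrib]; linarith
    _ < ε := sum_log_add_sub_log_lt_of_le hσ hc hε hvM
end

section
/- Let s > 0 be the variance of a measurement and λ > 0. The function g(v) = (1/2)·log(1 + a/(σ²+v)) + (λ/2)·(v/s + log(s/(s+v))) on [0,∞), with a, σ² > 0, is convex, and its derivative at v = 0 equals −a/(2σ²(σ²+a)) + 0; hence if a/(σ²(σ²+a)) > 0 the unconstrained minimizer of g is strictly positive. -/
/-!
The derivative of `log (1 + a / (c + v))` is `-a / ((c + v) (c + v + a))` and that of
`v / s + log (s / (s + v))` is `1 / s - 1 / (s + v)`; both increase with `v`, so `g` is convex.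
The second of these vanishes at `v = 0`, so `g'(0) = -a / (2σ²(σ² + a)) < 0`, whereas a
minimizer of `g` over `[0, ∞)` sitting at the endpoint `0` would force `g'(0) ≥ 0`.
-/

open Real Set

lemma IsLocalMinOn.hasDerivWithinAt_Ici_nonneg {f : ℝ → ℝ} {f' a : ℝ}
    (h : IsLocalMinOn f (Ici a) a) (hf : HasDerivWithinAt f f' (Ici a) a) : 0 ≤ f' := by
  have hcone : (1 : ℝ) ∈ posTangentConeAt (Ici a) a :=
    one_mem_posTangentConeAt_iff_frequently.2
      (eventually_nhdsWithin_of_forall fun (_ : ℝ) (hx : _ ∈ Ioi a) => mem_Ici.2 hx.out.le).frequently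
  simpa using h.hasFDerivWithinAt_nonneg hf.hasFDerivWithinAt hcone

lemma convexOn_Ioi_of_hasDerivAt_of_monotoneOn {f f' : ℝ → ℝ} {b : ℝ}
    (hf : ∀ x ∈ Ioi b, HasDerivAt f (f' x) x) (hf' : MonotoneOn f' (Ioi b)) :
    ConvexOn ℝ (Ioi b) f := by
  refine MonotoneOn.convexOn_of_deriv (convex_Ioi b)
    (fun x hx => (hf x hx).continuousAt.continuousWithinAt) ?_ ?_ <;> rw [interior_Ioi]
  · exact fun x hx => (hf x hx).differentiableAt.differentiableWithinAt
  · intro x hx y hy hxy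
    rw [(hf x hx).deriv, (hf y hy).deriv]
    exact hf' hx hy hxy

lemma hasDerivAt_log_one_add_div {a c v : ℝ} (hv : c + v ≠ 0) (hva : c + v + a ≠ 0) :
    HasDerivAt (fun v => log (1 + a / (c + v))) (-a / ((c + v) * (c + v + a))) v := by
  have hu : HasDerivAt (fun v => 1 + a / (c + v)) (-a / (c + v) ^ 2) v :=
    (((hasDerivAt_const v a).div ((hasDerivAt_id' v).const_add c) hv).const_add 1).congr_deriv
      (by ring)
  have hu_ne : 1 + a / (c + v) ≠ 0 := by
    rwa [one_add_div hv, div_ne_zero_iff, and_iff_left hv]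
  refine (hu.log hu_ne).congr_deriv ?_
  field_simp

lemma hasDerivAt_div_add_log_div {s v : ℝ} (hs : s ≠ 0) (hv : s + v ≠ 0) :
    HasDerivAt (fun v => v / s + log (s / (s + v))) (1 / s - 1 / (s + v)) v := by
  have hq : HasDerivAt (fun v => s / (s + v)) (-s / (s + v) ^ 2) v :=
    ((hasDerivAt_const v s).div ((hasDerivAt_id' v).const_add s) hv).congr_deriv (by ring)
  refine (((hasDerivAt_id' v).div_const s).add (hq.log (div_ne_zero hs hv))).congr_deriv ?_
  field_simp
  ring

lemma convexOn_log_one_add_div {a c : ℝ} (ha : 0 ≤ a) :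
    ConvexOn ℝ (Ioi (-c)) fun v => log (1 + a / (c + v)) := by
  refine convexOn_Ioi_of_hasDerivAt_of_monotoneOn
    (fun v (hv : -c < v) => hasDerivAt_log_one_add_div (by linarith) (by linarith))
    fun x (hx : -c < x) y (_ : -c < y) hxy => ?_
  have hcx : 0 < c + x := by linarith
  rw [neg_div, neg_div, neg_le_neg_iff]
  gcongr
  linarith

lemma convexOn_div_add_log_div {s : ℝ} (hs : s ≠ 0) :
    ConvexOn ℝ (Ioi (-s)) fun v => v / s + log (s / (s + v)) := by
  refine convexOn_Ioi_of_hasDerivAt_of_monotoneOn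
    (fun v (hv : -s < v) => hasDerivAt_div_add_log_div hs (by linarith))
    fun x (hx : -s < x) y _ hxy => ?_
  have hsx : 0 < s + x := by linarith
  gcongr

/-- Single-attacker tradeoff `g(v) = (1/2)log(1 + a/(σ²+v)) + (λ/2)(v/s + log(s/(s+v)))`
on `[0,∞)`: `g` is convex, its derivative at `0` is `−a/(2σ²(σ²+a))`, and any
minimizer of `g` over `[0,∞)` is strictly positive. -/
theorem stmt_12 (s lam a σ2 : ℝ) (hs : 0 < s) (hlam : 0 < lam) (ha : 0 < a) (hσ : 0 < σ2) :
    ConvexOn ℝ (Set.Ici (0 : ℝ))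
        (fun v : ℝ => (1 / 2) * Real.log (1 + a / (σ2 + v))
          + (lam / 2) * (v / s + Real.log (s / (s + v)))) ∧
    HasDerivAt (fun v : ℝ => (1 / 2) * Real.log (1 + a / (σ2 + v))
          + (lam / 2) * (v / s + Real.log (s / (s + v))))
        (-a / (2 * σ2 * (σ2 + a)) + 0) 0 ∧
    (0 < a / (σ2 * (σ2 + a)) →
      ∀ w : ℝ, 0 ≤ w →
        IsMinOn (fun v : ℝ => (1 / 2) * Real.log (1 + a / (σ2 + v))
          + (lam / 2) * (v / s + Real.log (s / (s + v)))) (Set.Ici (0 : ℝ)) w → 0 < w) := by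
  have hconv : ConvexOn ℝ (Ici 0) fun v => (1 / 2) * log (1 + a / (σ2 + v))
      + (lam / 2) * (v / s + log (s / (s + v))) :=
    (((convexOn_log_one_add_div ha.le).subset (Ici_subset_Ioi.2 (by linarith)) (convex_Ici 0)).smul
      (by norm_num)).add
    (((convexOn_div_add_log_div hs.ne').subset (Ici_subset_Ioi.2 (by linarith)) (convex_Ici 0)).smul
      (by positivity))
  have hderiv : HasDerivAt (fun v => (1 / 2) * log (1 + a / (σ2 + v))
      + (lam / 2) * (v / s + log (s / (s + v)))) (-a / (2 * σ2 * (σ2 + a)) + 0) 0 := by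
    refine (((hasDerivAt_log_one_add_div (a := a) (by simpa using hσ.ne')
      (by rw [add_zero]; positivity)).const_mul (1 / 2 : ℝ)).add
      ((hasDerivAt_div_add_log_div hs.ne' (by simpa using hs.ne')).const_mul (lam / 2))).congr_deriv
      ?_
    field_simp
    ring
  refine ⟨hconv, hderiv, fun _ w hw hmin => hw.lt_of_ne ?_⟩
  rintro rfl
  have hderiv_nonneg := hmin.localize.hasDerivWithinAt_Ici_nonneg hderiv.hasDerivWithinAt
  have : 0 < a / (2 * σ2 * (σ2 + a)) := by positivity
  linarith [neg_div (2 * σ2 * (σ2 + a)) a]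
end

section
/- Let Σ be an m×m positive definite matrix and v, w ∈ [0,∞)ᵐ with v ≤ w componentwise. Then log det(Σ + diag(w)) − log det(Σ + diag(v)) ≤ Σ_i log(1 + (w_i − v_i)/(λ_min(Σ) + v_i)), where λ_min(Σ) is the smallest eigenvalue of Σ. -/
/-!
Raise the diagonal from `v` to `w` one coordinate at a time. Each step adds `t • eᵢ eᵢᵀ` to
`A = Σ + diag u` with `v ≤ u`, so by the matrix determinant lemma the log-determinant grows by
`log (1 + t (A⁻¹)ᵢᵢ)`. Since `A ⪰ diag (λ_min(Σ) + u)`, one has `(A⁻¹)ᵢᵢ ≤ 1 / (λ_min(Σ) + uᵢ)`,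
and `uᵢ = vᵢ` for the coordinate not yet raised; the increments telescope to the claim.
-/
open Matrix Real

namespace Matrix
variable {n : Type*} [DecidableEq n]

theorem PosSemidef.posDef_of_sub_diagonal {A : Matrix n n ℝ} {d : n → ℝ}
    (hd : ∀ j, 0 < d j) (hAd : (A - diagonal d).PosSemidef) : A.PosDef := by
  simpa using (posDef_diagonal_iff.mpr hd).add_posSemidef hAd

theorem diagonal_single_eq_vecMulVec {R : Type*} [MulZeroOneClass R] (i : n) (t : R) :
    diagonal (Pi.single i t) = vecMulVec (Pi.single i t) (Pi.single i 1) := by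
  ext j k
  simp [diagonal_apply, vecMulVec_apply, Pi.single_apply]
  grind

variable [Fintype n]

theorem det_add_diagonal_single {R : Type*} [CommRing R] {A : Matrix n n R} (hA : IsUnit A.det)
    (i : n) (t : R) : (A + diagonal (Pi.single i t)).det = A.det * (1 + t * A⁻¹ i i) := by
  rw [diagonal_single_eq_vecMulVec, vecMulVec_eq Unit, det_add_replicateCol_mul_replicateRow hA]
  simp [det_unique, mul_apply, Pi.single_apply, mul_comm]

theorem IsHermitian.posSemidef_sub_iInf_eigenvalues_smul_one {S : Matrix n n ℝ}
    (hS : S.IsHermitian) : (S - (⨅ j, hS.eigenvalues j) • 1).PosSemidef := by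
  rw [posSemidef_iff_isHermitian_and_spectrum_nonneg, ← Algebra.algebraMap_eq_smul_one,
    ← spectrum.sub_singleton_eq, hS.spectrum_real_eq_range_eigenvalues]
  refine ⟨hS.sub (isHermitian_diagonal _), ?_⟩
  rintro _ ⟨_, ⟨j, rfl⟩, _, rfl, rfl⟩
  exact sub_nonneg.mpr (ciInf_le (Set.finite_range hS.eigenvalues).bddBelow j)

theorem PosDef.iInf_eigenvalues_pos [Nonempty n] {S : Matrix n n ℝ} (hS : S.PosDef) :
    0 < ⨅ j, hS.1.eigenvalues j := by
  obtain ⟨j, hj⟩ := exists_eq_ciInf_of_finite (f := hS.1.eigenvalues)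
  exact hj ▸ hS.eigenvalues_pos j

theorem mul_sq_le_dotProduct_diagonal_mulVec {d : n → ℝ} (hd : 0 ≤ d) (x : n → ℝ) (i : n) :
    d i * x i ^ 2 ≤ x ⬝ᵥ diagonal d *ᵥ x := by
  have hterm (j : n) : x j * (d j * x j) = d j * x j ^ 2 := by ring
  simp only [dotProduct, mulVec_diagonal, hterm]
  exact Finset.single_le_sum (fun j _ => mul_nonneg (hd j) (sq_nonneg (x j))) (Finset.mem_univ i)

/-- With `x = A⁻¹ eᵢ` one has `xᵀ A x = xᵢ = (A⁻¹)ᵢᵢ`, while `A ⪰ diag d` gives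
`xᵀ A x ≥ dᵢ xᵢ²`. -/
theorem inv_apply_self_le_of_posSemidef_sub_diagonal {A : Matrix n n ℝ} {d : n → ℝ}
    (hd : ∀ j, 0 < d j) (hAd : (A - diagonal d).PosSemidef) (i : n) : A⁻¹ i i ≤ (d i)⁻¹ := by
  have hA := hAd.posDef_of_sub_diagonal hd
  set x := A⁻¹ *ᵥ Pi.single i 1
  have hxi : x i = A⁻¹ i i := by simp [x, mulVec_single]
  have hxAx : x ⬝ᵥ A *ᵥ x = x i := by
    rw [mulVec_mulVec, mul_nonsing_inv _ ((isUnit_iff_isUnit_det A).mp hA.isUnit), one_mulVec,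
      dotProduct_single, mul_one]
  have hgap : 0 ≤ x ⬝ᵥ (A - diagonal d) *ᵥ x := by
    simpa using hAd.dotProduct_mulVec_nonneg x
  rw [sub_mulVec, dotProduct_sub, hxAx] at hgap
  have hxDx := mul_sq_le_dotProduct_diagonal_mulVec (fun j => (hd j).le) x i
  have hxpos : 0 < x i := hxi ▸ hA.inv.diag_pos
  rw [← hxi, ← one_div, le_div_iff₀ (hd i)]
  nlinarith

theorem log_det_add_diagonal_single_sub_le {A : Matrix n n ℝ} {d : n → ℝ}
    (hd : ∀ j, 0 < d j) (hAd : (A - diagonal d).PosSemidef) (i : n) {t : ℝ} (ht : 0 ≤ t) :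
    log (A + diagonal (Pi.single i t)).det - log A.det ≤ log (1 + t / d i) := by
  have hA := hAd.posDef_of_sub_diagonal hd
  have hinv_pos : 0 < A⁻¹ i i := hA.inv.diag_pos
  have hfactor_pos : 0 < 1 + t * A⁻¹ i i := by positivity
  rw [det_add_diagonal_single hA.det_pos.ne'.isUnit, log_mul hA.det_pos.ne' hfactor_pos.ne',
    add_sub_cancel_left, div_eq_mul_inv]
  gcongr
  exact inv_apply_self_le_of_posSemidef_sub_diagonal hd hAd i

theorem log_det_add_diagonal_piecewise_sub_le {S : Matrix n n ℝ} {lam : ℝ} (hlam : 0 < lam)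
    (hS : (S - lam • 1).PosSemidef) {v w : n → ℝ} (hv : 0 ≤ v) (hvw : v ≤ w) (s : Finset n) :
    log (S + diagonal (s.piecewise w v)).det - log (S + diagonal v).det
      ≤ ∑ i ∈ s, log (1 + (w i - v i) / (lam + v i)) := by
  induction s using Finset.induction_on with
  | empty => simp
  | insert a s ha ih =>
    set u := s.piecewise w v
    have hua : u a = v a := s.piecewise_eq_of_notMem w v ha
    have hvu : v ≤ u := s.le_piecewise_of_le_of_le hvw le_rfl
    have hstep : (insert a s).piecewise w v
        = fun j => u j + (Pi.single a (w a - v a) : n → ℝ) j := by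
      ext j
      by_cases hj : j = a <;> simp [u, hj, hua]
    have hshift : S + diagonal u - diagonal (fun j => lam + u j) = S - lam • 1 := by
      rw [smul_one_eq_diagonal, ← diagonal_add]
      abel
    have hincr := log_det_add_diagonal_single_sub_le (A := S + diagonal u)
      (fun j => add_pos_of_pos_of_nonneg hlam ((hv j).trans (hvu j))) (hshift ▸ hS) a
      (sub_nonneg.mpr (hvw a))
    rw [hua] at hincr
    rw [Finset.sum_insert ha, hstep, ← diagonal_add, ← add_assoc]
    linarith

end Matrix

theorem stmt_17_general (m : ℕ) (S : Matrix (Fin m) (Fin m) ℝ) (hS : S.PosDef)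
    (v w : Fin m → ℝ) (hv : ∀ i, 0 ≤ v i) (hvw : ∀ i, v i ≤ w i) :
    Real.log ((S + Matrix.diagonal w).det) - Real.log ((S + Matrix.diagonal v).det)
      ≤ ∑ i, Real.log (1 + (w i - v i) / ((⨅ j, hS.1.eigenvalues j) + v i)) := by
  rcases isEmpty_or_nonempty (Fin m) with _ | _
  · simp
  simpa using log_det_add_diagonal_piecewise_sub_le hS.iInf_eigenvalues_pos
    hS.1.posSemidef_sub_iInf_eigenvalues_smul_one hv hvw Finset.univ

/-- Growth bound for the log-determinant along diagonal increments:
for `Σ` positive definite and `0 ≤ v ≤ w` componentwise,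
`log det(Σ + diag w) − log det(Σ + diag v) ≤ Σ_i log(1 + (w_i − v_i)/(λ_min(Σ) + v_i))`. -/
theorem stmt_17 (m : ℕ) (S : Matrix (Fin m) (Fin m) ℝ) (hS : S.PosDef)
    (v w : Fin m → ℝ) (hv : ∀ i, 0 ≤ v i) (hw : ∀ i, 0 ≤ w i) (hvw : ∀ i, v i ≤ w i) :
    Real.log ((S + Matrix.diagonal w).det) - Real.log ((S + Matrix.diagonal v).det)
      ≤ ∑ i, Real.log (1 + (w i - v i) / ((⨅ j, hS.1.eigenvalues j) + v i)) :=
  stmt_17_general m S hS v w hv hvw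
end
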